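/- arXiv:2205.10697 — 3 statements merged into one kernel-verified Lean document; each statement's English description precedes it below -/
import Mathlib

section
/- Early-stopping validation is rate-preserving (Theorem 1, with the Donsker hypothesis replaced by the uniform empirical-process bound it implies). Let M be a countable set of measurable functions m : Z → ℝ on a measurable space Z, let P be a probability law on Z, and on a probability space Ω let (Z_i) and (Z̃_i) be two independent i.i.d. sequences with law P, with training empirical mean P_n f = (1/n) Σ_{i=1}^n f(Z_i) and validation empirical mean P̃_n f = (1/n) Σ_{i=1}^n f(Z̃_i). Assume: (i) there is B < ∞ with |∫ m dP| ≤ B for all m ∈ M, and a fixed m* ∈ M with ∫ m* dP ≤ ∫ m dP for all m ∈ M; (ii) both sup_{m∈M} |P_n m − P m| and sup_{m∈M} |P̃_n m − P m| are O_P(n^{-1/2}), i.e. for every δ > 0 there is C with P( sup_{m∈M} |P_n m − P m| > C n^{-1/2} ) ≤ δ for all n, and likewise for P̃_n; (iii) for each n there are K_n ∈ ℕ and random functions ℓ_{1,n}, …, ℓ_{K_n,n} ∈ M (empirical minimizers over nested random classes) and random functions λ_{1,n}, …, λ_{K_n,n} ∈ M (the corresponding population minimizers) such that almost surely for all k: P_n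 ℓ_{k,n} ≤ P_n λ_{k,n}, ∫ λ_{k,n} dP ≤ ∫ ℓ_{k,n} dP, ∫ λ_{k+1,n} dP ≤ ∫ λ_{k,n} dP, and P_n ℓ_{k+1,n} ≤ P_n ℓ_{k,n}; (iv) ε_n > 0 with √n · ε_n → ∞, Δ_{k,n} = P̃_n ℓ_{k+1,n} − P̃_n ℓ_{k,n}, and k*_n is the smallest k with Δ_{k,n} > ε_n (and k*_n = K_n if no such k exists); (v) r_n → 0 and ∫ ℓ_{K_n,n} dP − ∫ m* dP = o_P(r_n), i.e. (1/r_n)(∫ ℓ_{K_n,n} dP − ∫ m* dP) → 0 in probability. Then ∫ ℓ_{k*_n,n} dP − ∫ m* dP = o_P(r_n). -/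
open MeasureTheory Filter ProbabilityTheory
open scoped ENNReal

/-- Empirical average of `f` over the first `n` draws `W 0, …, W (n-1)`. -/
noncomputable def empAvg {Ω Zs : Type*} (W : ℕ → Ω → Zs) (n : ℕ) (f : Zs → ℝ)
    (ω : Ω) : ℝ :=
  (n : ℝ)⁻¹ * ∑ i ∈ Finset.range n, f (W i ω)

/-- Theorem 1 (early-stopping validation is rate-preserving), with the Donsker
hypothesis replaced by the uniform `O_P(n^{-1/2})` empirical-process bounds it
implies.  `W (Sum.inl i)` are the training draws and `W (Sum.inr i)` the
validation draws; `ℓ n k` are the empirical minimizers over nested (random)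
classes, `lam n k` the corresponding population minimizers, `mstar` the
population minimizer over the parent class `M`, and `kstar n` the early-stopping
index.  If the final minimizer `ℓ n (K n)` has excess risk `o_P(r n)`, so does
the early-stopped `ℓ n (kstar n)`. -/
theorem early_stopping_is_rate_preserving
    {Zs : Type*} [MeasurableSpace Zs] (P : Measure Zs) [IsProbabilityMeasure P]
    {Ω : Type*} [MeasurableSpace Ω] (μ : Measure Ω) [IsProbabilityMeasure μ]
    -- two independent i.i.d. sequences with law `P`
    (W : ℕ ⊕ ℕ → Ω → Zs)
    (hWmeas : ∀ i, Measurable (W i))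
    (hWlaw : ∀ i, Measure.map (W i) μ = P)
    (hWindep : iIndepFun W μ)
    -- the countable parent class `M`, with uniformly bounded means (i)
    (M : Set (Zs → ℝ)) (hMcount : M.Countable) (hMmeas : ∀ m ∈ M, Measurable m)
    (B : ℝ) (hB : ∀ m ∈ M, |∫ z, m z ∂P| ≤ B)
    (mstar : Zs → ℝ) (hmstarM : mstar ∈ M)
    (hmstar : ∀ m ∈ M, ∫ z, mstar z ∂P ≤ ∫ z, m z ∂P)
    -- (ii) uniform O_P(n^{-1/2}) bounds for training and validation processes
    (hTrain : ∀ δ : ℝ≥0∞, 0 < δ → ∃ C : ℝ, ∀ n : ℕ, 1 ≤ n →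
      μ {ω | ∃ m ∈ M,
        |empAvg (fun i => W (Sum.inl i)) n m ω - ∫ z, m z ∂P| > C / Real.sqrt n}
        ≤ δ)
    (hVal : ∀ δ : ℝ≥0∞, 0 < δ → ∃ C : ℝ, ∀ n : ℕ, 1 ≤ n →
      μ {ω | ∃ m ∈ M,
        |empAvg (fun i => W (Sum.inr i)) n m ω - ∫ z, m z ∂P| > C / Real.sqrt n}
        ≤ δ)
    -- (iii) nested empirical and population minimizers, `k = 1, …, K n`
    (K : ℕ → ℕ) (hK : ∀ n, 1 ≤ K n)
    (ℓ lam : ℕ → ℕ → Ω → Zs → ℝ)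
    (hℓM : ∀ n k ω, 1 ≤ k → k ≤ K n → ℓ n k ω ∈ M)
    (hlamM : ∀ n k ω, 1 ≤ k → k ≤ K n → lam n k ω ∈ M)
    (hmin : ∀ n : ℕ, ∀ᵐ ω ∂μ, ∀ k, 1 ≤ k → k ≤ K n →
      (empAvg (fun i => W (Sum.inl i)) n (ℓ n k ω) ω
          ≤ empAvg (fun i => W (Sum.inl i)) n (lam n k ω) ω) ∧
      ((∫ z, lam n k ω z ∂P) ≤ ∫ z, ℓ n k ω z ∂P) ∧
      (k < K n →
        ((∫ z, lam n (k + 1) ω z ∂P) ≤ ∫ z, lam n k ω z ∂P) ∧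
        (empAvg (fun i => W (Sum.inl i)) n (ℓ n (k + 1) ω) ω
          ≤ empAvg (fun i => W (Sum.inl i)) n (ℓ n k ω) ω)))
    -- (iv) the early-stopping rule with thresholds `ε n` shrinking slower
    -- than `n^{-1/2}`; `Δ n k ω` is the change in validation error
    (ε : ℕ → ℝ) (hε : ∀ n, 0 < ε n)
    (hεn : Tendsto (fun n : ℕ => Real.sqrt n * ε n) atTop atTop)
    (kstar : ℕ → Ω → ℕ)
    (hkstar_mem : ∀ n ω, 1 ≤ kstar n ω ∧ kstar n ω ≤ K n)
    (hkstar_min : ∀ n ω, ∀ k, 1 ≤ k → k < K n →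
      empAvg (fun i => W (Sum.inr i)) n (ℓ n (k + 1) ω) ω
          - empAvg (fun i => W (Sum.inr i)) n (ℓ n k ω) ω > ε n →
      (kstar n ω ≤ k ∧
        empAvg (fun i => W (Sum.inr i)) n (ℓ n (kstar n ω + 1) ω) ω
          - empAvg (fun i => W (Sum.inr i)) n (ℓ n (kstar n ω) ω) ω > ε n))
    (hkstar_last : ∀ n ω,
      (¬ ∃ k, 1 ≤ k ∧ k < K n ∧
        empAvg (fun i => W (Sum.inr i)) n (ℓ n (k + 1) ω) ω
          - empAvg (fun i => W (Sum.inr i)) n (ℓ n k ω) ω > ε n) →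
      kstar n ω = K n)
    -- (v) the final empirical minimizer converges at rate `o_P(r n)`
    (r : ℕ → ℝ) (hr : ∀ n, 0 < r n) (hr0 : Tendsto r atTop (nhds 0))
    (hfinal : ∀ e : ℝ, 0 < e →
      Tendsto (fun n => μ {ω |
        |(r n)⁻¹ * ((∫ z, ℓ n (K n) ω z ∂P) - ∫ z, mstar z ∂P)| > e})
        atTop (nhds 0)) :
    -- conclusion: the early-stopped minimizer converges at rate `o_P(r n)`
    ∀ e : ℝ, 0 < e →
      Tendsto (fun n => μ {ω |
        |(r n)⁻¹ * ((∫ z, ℓ n (kstar n ω) ω z ∂P) - ∫ z, mstar z ∂P)| > e})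
        atTop (nhds 0) := by
  intro e he
  rw [ENNReal.tendsto_nhds_zero]
  intro δ hδ
  have hδ2 : (0 : ℝ≥0∞) < δ / 2 := ENNReal.half_pos hδ.ne'
  have hδ4 : (0 : ℝ≥0∞) < δ / 2 / 2 := ENNReal.half_pos hδ2.ne'
  obtain ⟨C1, hC1⟩ := hTrain (δ / 2 / 2) hδ4
  obtain ⟨C2, hC2⟩ := hVal (δ / 2 / 2) hδ4
  have hfin := ENNReal.tendsto_nhds_zero.mp (hfinal e he) (δ / 2 / 2) hδ4
  have hεev := hεn.eventually_gt_atTop (2 * C1 + 2 * C2)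
  filter_upwards [hfin, hεev, eventually_ge_atTop 1] with n hfinn hεgt hn1
  have hsq : (0 : ℝ) < Real.sqrt n :=
    Real.sqrt_pos.mpr (by exact_mod_cast Nat.lt_of_lt_of_le Nat.zero_lt_one hn1)
  -- the three "bad" events
  set A : Set Ω := {ω | ∃ m ∈ M,
    |empAvg (fun i => W (Sum.inl i)) n m ω - ∫ z, m z ∂P| > C1 / Real.sqrt n} with hAdef
  set Bs : Set Ω := {ω | ∃ m ∈ M,
    |empAvg (fun i => W (Sum.inr i)) n m ω - ∫ z, m z ∂P| > C2 / Real.sqrt n} with hBdef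
  set F : Set Ω := {ω |
    |(r n)⁻¹ * ((∫ z, ℓ n (K n) ω z ∂P) - ∫ z, mstar z ∂P)| > e} with hFdef
  have key : ({ω | |(r n)⁻¹ * ((∫ z, ℓ n (kstar n ω) ω z ∂P) - ∫ z, mstar z ∂P)| > e} : Set Ω)
      ≤ᵐ[μ] ((A ∪ Bs ∪ F : Set Ω)) := by
    filter_upwards [hmin n] with ω hω hbad
    by_cases hA : ∃ m ∈ M,
        |empAvg (fun i => W (Sum.inl i)) n m ω - ∫ z, m z ∂P| > C1 / Real.sqrt n
    · exact Set.mem_union_left _ (Set.mem_union_left _ hA)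
    by_cases hB' : ∃ m ∈ M,
        |empAvg (fun i => W (Sum.inr i)) n m ω - ∫ z, m z ∂P| > C2 / Real.sqrt n
    · exact Set.mem_union_left _ (Set.mem_union_right _ hB')
    push_neg at hA hB'
    -- on the good event, the stopping rule never fires, so `kstar n ω = K n`
    have hkK : kstar n ω = K n := by
      refine hkstar_last n ω ?_
      rintro ⟨k, hk1, hkltK, hΔ⟩
      obtain ⟨hle, hΔ'⟩ := hkstar_min n ω k hk1 hkltK hΔ
      obtain ⟨hj1, hjK⟩ := hkstar_mem n ω
      have hjlt : kstar n ω < K n := lt_of_le_of_lt hle hkltK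
      have hℓj : ℓ n (kstar n ω) ω ∈ M := hℓM n _ ω hj1 hjK
      have hℓj1 : ℓ n (kstar n ω + 1) ω ∈ M := hℓM n _ ω (by omega) hjlt
      have hlamj : lam n (kstar n ω) ω ∈ M := hlamM n _ ω hj1 hjK
      obtain ⟨h1, h2, h3⟩ := hω (kstar n ω) hj1 hjK
      obtain ⟨_, h4⟩ := h3 hjlt
      have d1 := abs_le.mp (hA _ hℓj1)
      have d2 := abs_le.mp (hA _ hlamj)
      have d3 := abs_le.mp (hB' _ hℓj)
      have d4 := abs_le.mp (hB' _ hℓj1)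
      have hchain : ε n < (2 * C1 + 2 * C2) / Real.sqrt n := by
        have h2C : (2 * C1 + 2 * C2) / Real.sqrt n
            = 2 * (C1 / Real.sqrt n) + 2 * (C2 / Real.sqrt n) := by ring
        rw [h2C]
        linarith [d1.1, d1.2, d2.1, d2.2, d3.1, d3.2, d4.1, d4.2, h1, h2, h4, hΔ']
      have := (lt_div_iff₀ hsq).mp hchain
      rw [mul_comm] at this
      linarith [hεgt]
    have hbad' : |(r n)⁻¹ * ((∫ z, ℓ n (kstar n ω) ω z ∂P) - ∫ z, mstar z ∂P)| > e := hbad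
    rw [hkK] at hbad'
    exact Set.mem_union_right _ hbad'
  calc μ {ω | |(r n)⁻¹ * ((∫ z, ℓ n (kstar n ω) ω z ∂P) - ∫ z, mstar z ∂P)| > e}
      ≤ μ (A ∪ Bs ∪ F) := measure_mono_ae key
    _ ≤ μ (A ∪ Bs) + μ F := measure_union_le _ _
    _ ≤ (μ A + μ Bs) + μ F := add_le_add_left (measure_union_le _ _) _
    _ ≤ (δ / 2 / 2 + δ / 2 / 2) + δ / 2 / 2 :=
        add_le_add (add_le_add (hC1 n hn1) (hC2 n hn1)) hfinn
    _ ≤ (δ / 2 / 2 + δ / 2 / 2) + (δ / 2 / 2 + δ / 2 / 2) :=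
        add_le_add le_rfl le_self_add
    _ = δ := by rw [ENNReal.add_halves, ENNReal.add_halves]
end

section
/- Class inclusion with the constant 2^p: rewriting a rectangle lasso fit as a step-function lasso fit. Let p ≥ 1, M > 0, β₀ ∈ ℝ, and let a^1, …, a^K, b^1, …, b^K ∈ ℝ^p with a^k_j < b^k_j for all k and j, and β ∈ ℝ^K with Σ_{k=1}^K |β_k| ≤ M. Then there exist J ∈ ℕ, points c^1, …, c^J ∈ ℝ^p, and γ ∈ ℝ^J with Σ_{j=1}^J |γ_j| ≤ 2^p · M such that for every x ∈ ℝ^p, β₀ + Σ_{k=1}^K β_k · 1(∀j: a^k_j ≤ x_j < b^k_j) = β₀ + Σ_{j=1}^J γ_j · 1(∀j': c^j_{j'} ≤ x_{j'}). -/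
open scoped Classical

lemma rect_indicator_key (p : ℕ) (a b x : Fin p → ℝ) (hab : ∀ j, a j < b j) :
    (if ∀ j, a j ≤ x j ∧ x j < b j then (1:ℝ) else 0)
      = ∑ s : Fin p → Bool, (∏ j, (if s j then (-1:ℝ) else 1)) *
          (if ∀ j', (if s j' then b j' else a j') ≤ x j' then (1:ℝ) else 0) := by
  set g : Fin p → Bool → ℝ := fun j t =>
    if t then (if b j ≤ x j then (-1:ℝ) else 0) else (if a j ≤ x j then (1:ℝ) else 0) with hg
  have h1 : ∀ s : Fin p → Bool,
      (∏ j, (if s j then (-1:ℝ) else 1)) *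
          (if ∀ j', (if s j' then b j' else a j') ≤ x j' then (1:ℝ) else 0)
        = ∏ j, g j (s j) := by
    intro s
    have : ∀ j, g j (s j) = (if s j then (-1:ℝ) else 1) *
        (if (if s j then b j else a j) ≤ x j then (1:ℝ) else 0) := by
      intro j; cases hsj : s j <;> simp [hg]
    rw [Finset.prod_congr rfl (fun j _ => this j), Finset.prod_mul_distrib,
      Finset.prod_boole]
    simp
  rw [Finset.sum_congr rfl (fun s _ => h1 s), ← Fintype.prod_sum]
  have h2 : ∀ j : Fin p, (∑ t : Bool, g j t)
      = (if a j ≤ x j ∧ x j < b j then (1:ℝ) else 0) := by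
    intro j
    rw [Fintype.sum_bool]
    rcases le_or_gt (a j) (x j) with h | h
    · rcases lt_or_ge (x j) (b j) with h' | h'
      · simp [hg, h, h', not_le.mpr h']
      · simp [hg, h, h', not_lt.mpr h']
    · have hb : ¬ b j ≤ x j := not_le.mpr (h.trans (hab j))
      simp [hg, hb, not_le.mpr h, h]
  rw [Finset.prod_congr rfl (fun j _ => h2 j), Finset.prod_boole]
  simp

/-- Rewriting a rectangle-basis lasso fit with ℓ1 coefficient norm at most `M`
as a step-function-basis lasso fit with ℓ1 coefficient norm at most `2^p * M`. -/
theorem rectangle_class_subset_step_class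
    (p : ℕ) (hp : 1 ≤ p) (M : ℝ) (hM : 0 < M) (β₀ : ℝ) (K : ℕ)
    (a b : Fin K → Fin p → ℝ) (hab : ∀ k j, a k j < b k j)
    (β : Fin K → ℝ) (hβ : ∑ k, |β k| ≤ M) :
    ∃ (J : ℕ) (c : Fin J → Fin p → ℝ) (γ : Fin J → ℝ),
      (∑ j, |γ j| ≤ 2 ^ p * M) ∧
      ∀ x : Fin p → ℝ,
        β₀ + ∑ k, β k * (if ∀ j, a k j ≤ x j ∧ x j < b k j then (1 : ℝ) else 0) =
          β₀ + ∑ j, γ j * (if ∀ j', c j j' ≤ x j' then (1 : ℝ) else 0) := by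
  set T := Fin K × (Fin p → Bool)
  let e : T ≃ Fin (Fintype.card T) := Fintype.equivFin T
  set C : T → Fin p → ℝ := fun t j' => if t.2 j' then b t.1 j' else a t.1 j' with hC
  set G : T → ℝ := fun t => β t.1 * ∏ j, (if t.2 j then (-1:ℝ) else 1) with hG
  refine ⟨Fintype.card T, fun j => C (e.symm j), fun j => G (e.symm j), ?_, ?_⟩
  · have h1 : ∑ j, |G (e.symm j)| = ∑ t : T, |G t| := Equiv.sum_comp e.symm (fun t => |G t|)
    have h2 : ∀ t : T, |G t| = |β t.1| := by
      intro t
      rw [hG, abs_mul]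
      have : |∏ j, (if t.2 j then (-1:ℝ) else 1)| = 1 := by
        rw [Finset.abs_prod]
        rw [Finset.prod_congr rfl (fun j _ => ?_), Finset.prod_const_one]
        cases t.2 j <;> simp
      rw [this, mul_one]
    rw [h1, Finset.sum_congr rfl (fun t _ => h2 t), Fintype.sum_prod_type]
    simp only [Finset.sum_const, Finset.card_univ, Fintype.card_fun, Fintype.card_bool,
      Fintype.card_fin, nsmul_eq_mul]
    push_cast
    rw [← Finset.mul_sum]
    exact mul_le_mul_of_nonneg_left hβ (by positivity)
  · intro x
    congr 1
    have h1 : ∑ j, G (e.symm j) * (if ∀ j', C (e.symm j) j' ≤ x j' then (1:ℝ) else 0)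
        = ∑ t : T, G t * (if ∀ j', C t j' ≤ x j' then (1:ℝ) else 0) :=
      Equiv.sum_comp e.symm (fun t => G t * (if ∀ j', C t j' ≤ x j' then (1:ℝ) else 0))
    rw [h1, Fintype.sum_prod_type]
    refine Finset.sum_congr rfl (fun k _ => ?_)
    rw [rect_indicator_key p (a k) (b k) x (hab k), Finset.mul_sum]
    refine Finset.sum_congr rfl (fun s _ => ?_)
    simp [hG, hC, mul_assoc, mul_comm, mul_left_comm]
end

section
/- Reduction of step-function knots to the data lattice. Let X_1, …, X_n ∈ ℝ^p be data points and let c ∈ ℝ^p be such that the set {i ∈ {1,…,n} : c_j ≤ (X_i)_j for all j} is nonempty. Then there exists c' ∈ ℝ^p with c ≤ c' (coordinatewise) such that each coordinate c'_j belongs to the finite set {(X_1)_j, …, (X_n)_j} (so c' lies in the lattice C_n generated by the data), and such that for every i ∈ {1,…,n}, 1(c ≤ X_i) = 1(c' ≤ X_i). Consequently, every step function 1(c ≤ x) is indistinguishable on the observed data from a step function whose knot lies in the finite lattice C_n = ∏_{j=1}^p {(X_1)_j, …, (X_n)_j}. -/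
/-- Reduction of step-function knots to the data lattice: any knot `c` whose
step function is nonzero at some data point can be replaced by a knot `c'`
whose coordinates are observed coordinate values, without changing the step
function's values on the data. -/
theorem knot_reduction_to_lattice
    (n p : ℕ) (X : Fin n → Fin p → ℝ) (c : Fin p → ℝ)
    (hne : ∃ i : Fin n, ∀ j, c j ≤ X i j) :
    ∃ c' : Fin p → ℝ,
      (∀ j, c j ≤ c' j) ∧
      (∀ j, ∃ i : Fin n, c' j = X i j) ∧
      (∀ i : Fin n, (∀ j, c j ≤ X i j) ↔ (∀ j, c' j ≤ X i j)) := by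
  classical
  set S : Finset (Fin n) := Finset.univ.filter (fun i => ∀ j, c j ≤ X i j) with hS
  have hSne : S.Nonempty := by
    obtain ⟨i, hi⟩ := hne
    exact ⟨i, by simp [hS, hi]⟩
  refine ⟨fun j => S.inf' hSne (fun i => X i j), ?_, ?_, ?_⟩
  · intro j
    apply Finset.le_inf'
    intro i hi
    exact (Finset.mem_filter.mp hi).2 j
  · intro j
    obtain ⟨i, hi, hval⟩ := Finset.exists_mem_eq_inf' hSne (fun i => X i j)
    exact ⟨i, hval⟩
  · intro i
    constructor
    · intro hi j
      exact Finset.inf'_le _ (by simp [hS, hi])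
    · intro hi j
      refine le_trans ?_ (hi j)
      apply Finset.le_inf'
      intro k hk
      exact (Finset.mem_filter.mp hk).2 j
end
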